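/- LRW complement bijection (from the proof of Lemma 17 of the paper): Assume the transcript is collision-free. Then the permutation E^{T_j} maps the set V \ {x₁ ⊕ h(τ₁), …, x_j ⊕ h(τ_j)} bijectively onto the set V \ {y₁ ⊕ h(τ₁), …, y_j ⊕ h(τ_j)}; that is, the image of V \ {x₁ ⊕ h(τ₁), …, x_j ⊕ h(τ_j)} under E^{T_j} equals V \ {y₁ ⊕ h(τ₁), …, y_j ⊕ h(τ_j)}. -/

import Mathlib

/-!
Write `uᵢ = xᵢ ⊕ h(τᵢ)` and `vᵢ = yᵢ ⊕ h(τᵢ)`. By induction on `j`, `E^{T_j}` sends every `uᵢ`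
with `i ≤ j` to `vᵢ`: the new swap sends `E^{T_j}(u_{j+1})` to `v_{j+1}` and fixes the earlier
`vᵢ`, which differ from `v_{j+1}` and, by injectivity of `E^{T_j}`, from `E^{T_j}(u_{j+1})`.
A permutation mapping the `uᵢ` onto the `vᵢ` maps the complement of the first set onto the
complement of the second.
-/

/-- The reprogrammed permutations `E^{T_i}` of the LRW hybrid argument:
`E^{T_0} = E` and
`E^{T_i} = swap(E^{T_{i-1}}(x_i ⊕ h(τ_i)), y_i ⊕ h(τ_i)) ∘ E^{T_{i-1}}`. -/
def lrwReprog {V 𝒯 : Type*} [DecidableEq V] [Add V]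
    (E : Equiv.Perm V) (h : 𝒯 → V) (τ : ℕ → 𝒯) (x y : ℕ → V) : ℕ → Equiv.Perm V
  | 0 => E
  | i + 1 =>
      Equiv.swap (lrwReprog E h τ x y i (x (i + 1) + h (τ (i + 1))))
          (y (i + 1) + h (τ (i + 1))) *
        lrwReprog E h τ x y i

open Set

theorem Set.injOn_Icc_of_forall_ne {V : Type*} {f : ℕ → V} {j : ℕ}
    (hf : ∀ a b, 1 ≤ a → a ≤ j → 1 ≤ b → b ≤ j → a ≠ b → f a ≠ f b) :
    InjOn f (Icc 1 j) := fun a ha b hb hab =>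
  by_contra fun hne => hf a b ha.1 ha.2 hb.1 hb.2 hne hab

theorem Equiv.Perm.image_compl_image_of_eqOn {V ι : Type*} (σ : Equiv.Perm V)
    {u v : ι → V} {s : Set ι} (hσ : EqOn (σ ∘ u) v s) :
    σ '' (u '' s)ᶜ = (v '' s)ᶜ := by
  rw [image_compl_eq σ.bijective, ← image_comp, hσ.image_eq]

section lrwReprog

variable {V 𝒯 : Type*} [DecidableEq V] [Add V]
  (E : Equiv.Perm V) (h : 𝒯 → V) (τ : ℕ → 𝒯) (x y : ℕ → V)

theorem lrwReprog_apply_of_mem_Icc {j : ℕ}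
    (hx : InjOn (fun i => x i + h (τ i)) (Icc 1 j))
    (hy : InjOn (fun i => y i + h (τ i)) (Icc 1 j)) :
    ∀ i ∈ Icc 1 j, lrwReprog E h τ x y j (x i + h (τ i)) = y i + h (τ i) := by
  induction j with
  | zero => intro i ⟨hi₁, hi₀⟩; omega
  | succ j ih =>
    have hsub : Icc 1 j ⊆ Icc 1 (j + 1) := Icc_subset_Icc_right j.le_succ
    have hlast : j + 1 ∈ Icc 1 (j + 1) := ⟨j.succ_pos, le_rfl⟩
    intro i hi
    rcases (Nat.le_succ_iff.1 hi.2) with hij | rfl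
    · have hi' : i ∈ Icc 1 j := ⟨hi.1, hij⟩
      have hne : i ≠ j + 1 := by omega
      have hprev := ih (hx.mono hsub) (hy.mono hsub) i hi'
      change Equiv.swap _ _ (lrwReprog E h τ x y j _) = _
      rw [hprev]
      refine Equiv.swap_apply_of_ne_of_ne ?_ (hy.ne hi hlast hne)
      rw [← hprev]
      exact (lrwReprog E h τ x y j).injective.ne (hx.ne hi hlast hne)
    · exact Equiv.swap_apply_left _ _

end lrwReprog

theorem lrw_complement_bijection_general {n j : ℕ} {𝒯 : Type*}
    (E : Equiv.Perm (Fin n → ZMod 2)) (h : 𝒯 → Fin n → ZMod 2)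
    (τ : ℕ → 𝒯) (x y : ℕ → Fin n → ZMod 2)
    (hx : ∀ a b, 1 ≤ a → a ≤ j → 1 ≤ b → b ≤ j → a ≠ b →
      x a + h (τ a) ≠ x b + h (τ b))
    (hy : ∀ a b, 1 ≤ a → a ≤ j → 1 ≤ b → b ≤ j → a ≠ b →
      y a + h (τ a) ≠ y b + h (τ b)) :
    (fun z => lrwReprog E h τ x y j z) ''
        (Set.univ \ ((fun i => x i + h (τ i)) '' Set.Icc 1 j)) =
      Set.univ \ ((fun i => y i + h (τ i)) '' Set.Icc 1 j) := by
  simp only [← compl_eq_univ_sdiff]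
  exact (lrwReprog E h τ x y j).image_compl_image_of_eqOn
    (lrwReprog_apply_of_mem_Icc E h τ x y
      (injOn_Icc_of_forall_ne hx) (injOn_Icc_of_forall_ne hy))

/-- LRW complement bijection (from the proof of Lemma 17): if the transcript is
collision-free, then `E^{T_j}` maps `V \ {x₁ ⊕ h(τ₁), …, x_j ⊕ h(τ_j)}` bijectively
onto `V \ {y₁ ⊕ h(τ₁), …, y_j ⊕ h(τ_j)}`. -/
theorem lrw_complement_bijection {n j : ℕ} (hn : 1 ≤ n) {𝒯 : Type*}
    (E : Equiv.Perm (Fin n → ZMod 2)) (h : 𝒯 → Fin n → ZMod 2)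
    (τ : ℕ → 𝒯) (x y : ℕ → Fin n → ZMod 2)
    (hx : ∀ a b, 1 ≤ a → a ≤ j → 1 ≤ b → b ≤ j → a ≠ b →
      x a + h (τ a) ≠ x b + h (τ b))
    (hy : ∀ a b, 1 ≤ a → a ≤ j → 1 ≤ b → b ≤ j → a ≠ b →
      y a + h (τ a) ≠ y b + h (τ b)) :
    (fun z => lrwReprog E h τ x y j z) ''
        (Set.univ \ ((fun i => x i + h (τ i)) '' Set.Icc 1 j)) =
      Set.univ \ ((fun i => y i + h (τ i)) '' Set.Icc 1 j) :=
  lrw_complement_bijection_general E h τ x y hx hy
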